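/- arXiv:2604.19938 — 6 statements merged into one kernel-verified Lean document; each statement's English description precedes it below -/
import Mathlib

section
/- Let σ₁ ≤ σ₂ ≤ ... ≤ σ_d be positive real numbers with ∏_{i=1}^d σ_i = 1. Then ((Σ_{i=1}^d σ_i)/d)^{d-1} ≥ (Σ_{i=1}^d 1/σ_i)/d. -/
/-!
Since `∏ σ = 1`, each `1 / σ i` is the product of the other `σ j`, so the claim is Maclaurin's
inequality `e_{d-1} / d ≤ (e_1 / d) ^ (d - 1)`. It is proved by adding one point at a time: if `t`
has `k` points with mean `A` and a point `T` is added, the new `e_k` is `∏ t + T * e_{k-1}(t)`,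
which is at most `A ^ k + k T A ^ (k - 1)` by AM-GM and induction, and Bernoulli's inequality at
the new mean `M` bounds this by `(k + 1) M ^ k`.
-/

open Finset

theorem prod_le_mean_pow {ι : Type*} (s : Finset ι) {x : ι → ℝ} (hx : ∀ i ∈ s, 0 ≤ x i) :
    ∏ i ∈ s, x i ≤ ((∑ i ∈ s, x i) / #s) ^ #s := by
  rcases s.eq_empty_or_nonempty with rfl | hs
  · simp
  have hcard : (0 : ℝ) < #s := by exact_mod_cast hs.card_pos
  have amgm := Real.geom_mean_le_arith_mean s (fun _ ↦ 1) x (fun _ _ ↦ zero_le_one)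
    (by simpa using hcard) hx
  simp only [Real.rpow_one, sum_const, nsmul_eq_mul, mul_one, one_mul] at amgm
  calc ∏ i ∈ s, x i = ((∏ i ∈ s, x i) ^ (#s : ℝ)⁻¹) ^ #s := by
        rw [← Real.rpow_natCast, ← Real.rpow_mul (prod_nonneg hx), inv_mul_cancel₀ hcard.ne',
          Real.rpow_one]
    _ ≤ ((∑ i ∈ s, x i) / #s) ^ #s := by gcongr; exact Real.rpow_nonneg (prod_nonneg hx) _

theorem sum_prod_erase_insert {ι M : Type*} [CommSemiring M] [DecidableEq ι] {s : Finset ι} {a : ι}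
    (ha : a ∉ s) (x : ι → M) :
    ∑ i ∈ insert a s, ∏ j ∈ (insert a s).erase i, x j
      = ∏ j ∈ s, x j + x a * ∑ i ∈ s, ∏ j ∈ s.erase i, x j := by
  rw [sum_insert ha, erase_insert ha, mul_sum]
  congr 1
  refine sum_congr rfl fun i hi ↦ ?_
  rw [erase_insert_of_ne (ne_of_mem_of_not_mem hi ha).symm, prod_insert (mt mem_of_mem_erase ha)]

/-- For `k ≥ 1`, with `S = k A` and `T + S = (k + 1) M`, the left side equals `k + 1` times the
Bernoulli lower bound `A ^ k + k A ^ (k - 1) (M - A)` for `M ^ k`. -/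
theorem maclaurin_step (k : ℕ) {S T : ℝ} (hS : 0 ≤ S) (hT : 0 ≤ T) :
    (S / k) ^ k + T * (k * (S / k) ^ (k - 1)) ≤ (k + 1) * ((T + S) / (k + 1)) ^ k := by
  rcases k with _ | j
  · simp
  push_cast
  set A := S / (j + 1)
  set M := (T + S) / (j + 1 + 1)
  have hA : 0 ≤ A := by positivity
  have hM : 0 ≤ M := by positivity
  have hTA : T = (j + 2) * M - (j + 1) * A := by simp only [A, M]; field_simp; ring
  have bernoulli := pow_add_mul_le_add_pow hA (b := M - A) (by linarith) (j + 1)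
  rw [add_sub_cancel, Nat.add_sub_cancel] at bernoulli
  push_cast at bernoulli
  linear_combination (j + 2) * bernoulli + (j + 1) * A ^ j * hTA

theorem sum_prod_erase_le_card_mul_mean_pow {ι : Type*} [DecidableEq ι] (s : Finset ι) {x : ι → ℝ}
    (hx : ∀ i ∈ s, 0 ≤ x i) :
    ∑ i ∈ s, ∏ j ∈ s.erase i, x j ≤ #s * ((∑ i ∈ s, x i) / #s) ^ (#s - 1) := by
  induction s using Finset.induction_on with
  | empty => simp
  | insert a t ha ih =>
    have hxt : ∀ i ∈ t, 0 ≤ x i := fun i hi ↦ hx i (mem_insert_of_mem hi)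
    have hxa : 0 ≤ x a := hx a (mem_insert_self a t)
    rw [sum_prod_erase_insert ha, card_insert_of_notMem ha, sum_insert ha, Nat.add_sub_cancel]
    push_cast
    calc ∏ j ∈ t, x j + x a * ∑ i ∈ t, ∏ j ∈ t.erase i, x j
        ≤ ((∑ i ∈ t, x i) / #t) ^ #t + x a * (#t * ((∑ i ∈ t, x i) / #t) ^ (#t - 1)) := by
          gcongr
          · exact prod_le_mean_pow t hxt
          · exact ih hxt
      _ ≤ (#t + 1) * ((x a + ∑ i ∈ t, x i) / (#t + 1)) ^ #t :=
          maclaurin_step #t (sum_nonneg hxt) hxa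

theorem stmt4_general (d : ℕ) (σ : Fin d → ℝ)
    (hpos : ∀ i, 0 < σ i)
    (hprod : ∏ i, σ i = 1) :
    ((∑ i, σ i) / d) ^ (d - 1) ≥ (∑ i, 1 / σ i) / d := by
  have hinv : ∀ i, 1 / σ i = ∏ j ∈ univ.erase i, σ j := fun i ↦ by
    rw [← hprod, ← mul_prod_erase univ σ (mem_univ i), mul_div_cancel_left₀ _ (hpos i).ne']
  have maclaurin := sum_prod_erase_le_card_mul_mean_pow univ fun i _ ↦ (hpos i).le
  simp only [card_univ, Fintype.card_fin, ← hinv] at maclaurin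
  exact div_le_of_le_mul₀ d.cast_nonneg
    (pow_nonneg (div_nonneg (sum_nonneg fun i _ ↦ (hpos i).le) d.cast_nonneg) _) (by linarith)

/-- If `σ₁ ≤ σ₂ ≤ ⋯ ≤ σ_d` are positive reals with `∏ σᵢ = 1`, then
`((∑ σᵢ)/d)^(d-1) ≥ (∑ 1/σᵢ)/d`. -/
theorem stmt4 (d : ℕ) (hd : 1 ≤ d) (σ : Fin d → ℝ)
    (hpos : ∀ i, 0 < σ i) (hmono : Monotone σ)
    (hprod : ∏ i, σ i = 1) :
    ((∑ i, σ i) / d) ^ (d - 1) ≥ (∑ i, 1 / σ i) / d :=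
  stmt4_general d σ hpos hprod
end

section
/- Let d ≥ 1, and let σ₁, ..., σ_d be positive real numbers. Then ((Σ_{i=1}^d σ_i)/d)^{d-1} ≥ (∏_{i=1}^d σ_i) · (Σ_{i=1}^d 1/σ_i)/d. -/
/-!
Induction on the number of variables, adding one `σ` at a time. Let `m`, `P` and `T` be the mean,
the product and the sum of reciprocals of the `n` old variables. The induction hypothesis
`P T ≤ n m^(n-1)` together with AM–HM `n ≤ m T` yields AM–GM `P ≤ m^n`, so the new left-hand side
`P + σ P T` is at most `m^n + n m^(n-1) σ`. This is bounded by `(n+1) ((n m + σ)/(n+1))^n`, the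
new right-hand side, by the tangent-line (Bernoulli) inequality for `t ↦ t^n` at `m`.
-/

open Finset

section
variable {ι K : Type*} [Field K] [LinearOrder K] [IsStrictOrderedRing K]

theorem card_le_mean_mul_sum_inv (s : Finset ι) {σ : ι → K} (hσ : ∀ i ∈ s, 0 < σ i) :
    (#s : K) ≤ (∑ i ∈ s, σ i) / #s * ∑ i ∈ s, 1 / σ i := by
  obtain rfl | hs := s.eq_empty_or_nonempty
  · simp
  have hS : 0 < ∑ i ∈ s, σ i := sum_pos hσ hs
  have hn : (0 : K) < #s := by exact_mod_cast hs.card_pos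
  have amhm := sq_sum_div_le_sum_sq_div s (fun _ ↦ (1 : K)) hσ
  simp only [sum_const, nsmul_eq_mul, mul_one, one_pow] at amhm
  rw [div_le_iff₀ hS] at amhm
  rw [div_mul_eq_mul_div, le_div_iff₀ hn]
  nlinarith

theorem pow_add_mul_le_succ_mul_mean_pow {m x : K} (hm : 0 ≤ m) (hx : 0 ≤ x) (n : ℕ) :
    m ^ n + n * m ^ (n - 1) * x ≤ (n + 1) * ((n * m + x) / (n + 1)) ^ n := by
  have hmean : (n * m + x) / (n + 1) = m + (x - m) / (n + 1) := by
    field_simp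
    ring
  have tangent := pow_add_mul_le_add_pow hm (b := (x - m) / (n + 1)) (n := n)
    (by rw [two_mul, add_assoc, ← hmean]; positivity)
  rw [← hmean] at tangent
  have hpred : (n : K) * m ^ (n - 1) * m = n * m ^ n := by
    cases n <;> simp [pow_succ, mul_assoc]
  calc m ^ n + n * m ^ (n - 1) * x
      = (n + 1) * (m ^ n + n * m ^ (n - 1) * ((x - m) / (n + 1))) := by
        field_simp
        linear_combination hpred
    _ ≤ (n + 1) * ((n * m + x) / (n + 1)) ^ n := by gcongr

theorem prod_mul_sum_inv_le_card_mul_mean_pow (s : Finset ι) {σ : ι → K}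
    (hσ : ∀ i ∈ s, 0 < σ i) :
    (∏ i ∈ s, σ i) * ∑ i ∈ s, 1 / σ i ≤ #s * ((∑ i ∈ s, σ i) / #s) ^ (#s - 1) := by
  induction s using Finset.cons_induction with
  | empty => simp
  | cons a t ha ih =>
    obtain ⟨ha_pos, ht⟩ := (forall_mem_cons ha _).mp hσ
    obtain rfl | hne := t.eq_empty_or_nonempty
    · simp [ha_pos.ne']
    rw [prod_cons, sum_cons, sum_cons, card_cons, Nat.add_sub_cancel, Nat.cast_succ]
    set n := #t
    set S := ∑ i ∈ t, σ i
    set P := ∏ i ∈ t, σ i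
    set T := ∑ i ∈ t, 1 / σ i
    set m := S / n
    have hn : (0 : K) < n := by exact_mod_cast hne.card_pos
    have hm : 0 ≤ m := div_nonneg (sum_nonneg fun i hi ↦ (ht i hi).le) hn.le
    have hP : 0 ≤ P := prod_nonneg fun i hi ↦ (ht i hi).le
    have hPT : P * T ≤ n * m ^ (n - 1) := ih ht
    have amgm : P ≤ m ^ n := by
      refine le_of_mul_le_mul_right ?_ hn
      calc P * n ≤ P * (m * T) := by gcongr; exact card_le_mean_mul_sum_inv t ht
        _ = P * T * m := by ring
        _ ≤ n * m ^ (n - 1) * m := by gcongr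
        _ = m ^ n * n := by rw [mul_assoc, pow_sub_one_mul hne.card_pos.ne', mul_comm]
    calc σ a * P * (1 / σ a + T) = P + σ a * (P * T) := by field_simp
      _ ≤ m ^ n + σ a * (n * m ^ (n - 1)) := by gcongr
      _ = m ^ n + n * m ^ (n - 1) * σ a := by ring
      _ ≤ (n + 1) * ((n * m + σ a) / (n + 1)) ^ n :=
        pow_add_mul_le_succ_mul_mean_pow hm ha_pos.le n
      _ = (n + 1) * ((σ a + S) / (n + 1)) ^ n := by
        rw [mul_div_cancel₀ S hn.ne', add_comm S]

theorem prod_mul_mean_inv_le_mean_pow (s : Finset ι) {σ : ι → K} (hσ : ∀ i ∈ s, 0 < σ i) :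
    (∏ i ∈ s, σ i) * ((∑ i ∈ s, 1 / σ i) / #s) ≤ ((∑ i ∈ s, σ i) / #s) ^ (#s - 1) := by
  rw [← mul_div_assoc]
  refine div_le_of_le_mul₀ (Nat.cast_nonneg _) ?_ ?_
  · exact pow_nonneg (div_nonneg (sum_nonneg fun i hi ↦ (hσ i hi).le) (Nat.cast_nonneg _)) _
  · rw [mul_comm _ (#s : K)]
    exact prod_mul_sum_inv_le_card_mul_mean_pow s hσ

end

theorem stmt5_general (d : ℕ) (σ : Fin d → ℝ)
    (hpos : ∀ i, 0 < σ i) :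
    ((∑ i, σ i) / d) ^ (d - 1) ≥ (∏ i, σ i) * ((∑ i, 1 / σ i) / d) := by
  simpa using prod_mul_mean_inv_le_mean_pow univ fun i _ ↦ hpos i

/-- For positive reals `σ₁, …, σ_d` (`d ≥ 1`),
`((∑ σᵢ)/d)^(d-1) ≥ (∏ σᵢ) · (∑ 1/σᵢ)/d`. -/
theorem stmt5 (d : ℕ) (hd : 1 ≤ d) (σ : Fin d → ℝ)
    (hpos : ∀ i, 0 < σ i) :
    ((∑ i, σ i) / d) ^ (d - 1) ≥ (∏ i, σ i) * ((∑ i, 1 / σ i) / d) :=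
  stmt5_general d σ hpos
end

section
/- Let A be an invertible d × d real (or complex) matrix. Then ‖A⁻¹‖_HS ≤ ‖A‖_HS^{d-1} / (|det A| · d^{(d-2)/2}), where ‖·‖_HS denotes the Hilbert–Schmidt (Frobenius) norm. -/
open Matrix

/-- The Hilbert–Schmidt (Frobenius) norm of a real square matrix. -/
noncomputable def hsNorm {d : ℕ} (A : Matrix (Fin d) (Fin d) ℝ) : ℝ :=
  Real.sqrt (∑ i, ∑ j, (A i j) ^ 2)

/-!
Let `t₁, …, t_d > 0` be the eigenvalues of `Aᴴ A`. Then `‖A‖²_HS = tr (Aᴴ A) = ∑ tᵢ`,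
`‖A⁻¹‖²_HS = tr (Aᴴ A)⁻¹ = ∑ tᵢ⁻¹` and `(det A)² = ∏ tᵢ`, so after squaring the claim becomes
Maclaurin's inequality `e_{d-1} / d ≤ (e₁ / d) ^ (d - 1)`, because `e_{d-1} = (∑ tᵢ⁻¹) ∏ tᵢ`.
Maclaurin's inequality is proved by induction on the number of variables: when a variable `x` is
added to `m` variables with sum `S`, AM–GM bounds `e_m ≤ (S / m) ^ m`, the induction hypothesis
bounds `e_{m-1}`, and Bernoulli's inequality `a ^ m + m a ^ (m - 1) b ≤ (a + b) ^ m` with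
`a = (m + 1) S` and `b = m x - S` absorbs the rest.
-/

open Finset in
theorem Real.card_pow_mul_prod_le_sum_pow {ι : Type*} (s : Finset ι) (t : ι → ℝ)
    (ht : ∀ i ∈ s, 0 ≤ t i) : (#s : ℝ) ^ #s * ∏ i ∈ s, t i ≤ (∑ i ∈ s, t i) ^ #s := by
  rcases s.eq_empty_or_nonempty with rfl | hs
  · simp
  have hn : (0 : ℝ) < #s := by exact_mod_cast hs.card_pos
  have hamgm := Real.geom_mean_le_arith_mean_weighted s (fun _ ↦ (#s : ℝ)⁻¹) t
    (fun _ _ ↦ by positivity) (by simp [hn.ne']) ht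
  rw [Real.finsetProd_rpow s t ht, ← mul_sum] at hamgm
  have := pow_le_pow_left₀ (Real.rpow_nonneg (prod_nonneg ht) _) hamgm #s
  rw [← Real.rpow_natCast, ← Real.rpow_mul (prod_nonneg ht), inv_mul_cancel₀ hn.ne',
    Real.rpow_one, mul_pow, inv_pow] at this
  rwa [le_inv_mul_iff₀ (by positivity)] at this

open Finset in
theorem Real.card_pow_mul_sum_inv_mul_prod_le {ι : Type*} [DecidableEq ι] (s : Finset ι)
    (t : ι → ℝ) (ht : ∀ i ∈ s, 0 < t i) :
    (#s : ℝ) ^ #s * ((∑ i ∈ s, (t i)⁻¹) * ∏ i ∈ s, t i) ≤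
      (#s : ℝ) ^ 2 * (∑ i ∈ s, t i) ^ (#s - 1) := by
  induction s using Finset.induction_on with
  | empty => simp
  | insert a s ha ih =>
    have hts : ∀ i ∈ s, 0 < t i := fun i hi ↦ ht i (mem_insert_of_mem hi)
    have hx : 0 < t a := ht a (mem_insert_self a s)
    rw [card_insert_of_notMem ha, sum_insert ha, sum_insert ha, prod_insert ha]
    rcases s.eq_empty_or_nonempty with rfl | hs
    · simp [hx.ne']
    obtain ⟨k, hk⟩ : ∃ k, #s = k + 1 := Nat.exists_eq_succ_of_ne_zero hs.card_pos.ne'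
    set x := t a
    set S := ∑ i ∈ s, t i
    set P := ∏ i ∈ s, t i
    set Q := ∑ i ∈ s, (t i)⁻¹
    have hS : 0 < S := sum_pos hts hs
    have hamgm : ((k : ℝ) + 1) ^ (k + 1) * P ≤ S ^ (k + 1) := by
      simpa [hk] using card_pow_mul_prod_le_sum_pow s t fun i hi ↦ (hts i hi).le
    have hind : ((k : ℝ) + 1) ^ (k + 1) * (Q * P) ≤ ((k : ℝ) + 1) ^ 2 * S ^ k := by
      simpa [hk] using ih hts
    have hbern := pow_add_mul_le_add_pow (a := ((k : ℝ) + 2) * S) (b := ((k : ℝ) + 1) * x - S)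
      (by positivity) (by nlinarith) (k + 1)
    simp only [hk, add_tsub_cancel_right, Nat.cast_add, Nat.cast_one] at hbern ⊢
    refine le_of_mul_le_mul_left ?_ (by positivity : (0 : ℝ) < ((k : ℝ) + 1) ^ (k + 1))
    calc ((k : ℝ) + 1) ^ (k + 1) * (((k : ℝ) + 1 + 1) ^ (k + 1 + 1) * ((x⁻¹ + Q) * (x * P)))
        = ((k : ℝ) + 2) ^ (k + 2) *
            (((k : ℝ) + 1) ^ (k + 1) * P + x * (((k : ℝ) + 1) ^ (k + 1) * (Q * P))) := by
          field_simp
          ring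
      _ ≤ ((k : ℝ) + 2) ^ (k + 2) * (S ^ (k + 1) + x * (((k : ℝ) + 1) ^ 2 * S ^ k)) := by
          gcongr
      _ = ((k : ℝ) + 2) ^ 2 * ((((k : ℝ) + 2) * S) ^ (k + 1) +
            (k + 1) * (((k : ℝ) + 2) * S) ^ k * (((k : ℝ) + 1) * x - S)) := by
          simp only [mul_pow]
          ring
      _ ≤ ((k : ℝ) + 2) ^ 2 * (((k : ℝ) + 2) * S + (((k : ℝ) + 1) * x - S)) ^ (k + 1) := by
          gcongr
      _ = ((k : ℝ) + 1) ^ (k + 1) * (((k : ℝ) + 1 + 1) ^ 2 * (x + S) ^ (k + 1)) := by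
          rw [show ((k : ℝ) + 2) * S + (((k : ℝ) + 1) * x - S) = ((k : ℝ) + 1) * (x + S) by ring,
            mul_pow]
          ring

theorem Real.rpow_sub_two_div_two_sq_mul_sq {x : ℝ} (hx : 0 < x) (d : ℕ) :
    (x ^ (((d : ℝ) - 2) / 2)) ^ 2 * x ^ 2 = x ^ d := by
  rw [← Real.rpow_natCast _ 2, ← Real.rpow_mul hx.le, ← Real.rpow_natCast x 2,
    ← Real.rpow_add hx, ← Real.rpow_natCast]
  congr 1
  push_cast
  ring

namespace Matrix

variable {n 𝕜 : Type*} [Fintype n] [DecidableEq n] [RCLike 𝕜] {A : Matrix n n 𝕜}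

theorem IsHermitian.trace_cfc (hA : A.IsHermitian) (f : ℝ → ℝ) :
    (cfc f A).trace = ∑ i, (f (hA.eigenvalues i) : 𝕜) := by
  rw [hA.cfc_eq, IsHermitian.cfc, Unitary.conjStarAlgAut_apply, trace_mul_cycle,
    Unitary.coe_star_mul_self, one_mul, trace_diagonal]
  rfl

theorem IsHermitian.trace_inv (hA : A.IsHermitian) (hdet : IsUnit A.det) :
    A⁻¹.trace = ∑ i, ((hA.eigenvalues i)⁻¹ : 𝕜) := by
  rw [nonsing_inv_eq_ringInverse,
    ← cfc_ringInverse_id (R := ℝ) A ((isUnit_iff_isUnit_det A).2 hdet) hA.isSelfAdjoint,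
    hA.trace_cfc]
  simp

theorem trace_conjTranspose_mul_self_eq_sum_sq {m n : Type*} [Fintype m] [Fintype n]
    (A : Matrix m n ℝ) : (Aᴴ * A).trace = ∑ i, ∑ j, A i j ^ 2 := by
  simp only [trace, diag, mul_apply, conjTranspose_apply, star_trivial, sq]
  exact Finset.sum_comm

end Matrix

theorem hsNorm_sq_eq_trace {d : ℕ} (A : Matrix (Fin d) (Fin d) ℝ) :
    hsNorm A ^ 2 = (Aᴴ * A).trace := by
  rw [hsNorm, Real.sq_sqrt (by positivity), trace_conjTranspose_mul_self_eq_sum_sq]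

theorem hsNorm_inv_sq_eq_trace_inv {d : ℕ} (A : Matrix (Fin d) (Fin d) ℝ) :
    hsNorm A⁻¹ ^ 2 = (Aᴴ * A)⁻¹.trace := by
  rw [hsNorm_sq_eq_trace, Matrix.mul_inv_rev, ← conjTranspose_nonsing_inv, trace_mul_comm]

theorem card_pow_mul_hsNorm_inv_sq_mul_det_sq_le {d : ℕ} (A : Matrix (Fin d) (Fin d) ℝ)
    (hA : IsUnit A.det) :
    (d : ℝ) ^ d * (hsNorm A⁻¹ ^ 2 * A.det ^ 2) ≤ (d : ℝ) ^ 2 * (hsNorm A ^ 2) ^ (d - 1) := by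
  have hB : (Aᴴ * A).PosDef := .conjTranspose_mul_self A <|
    mulVec_injective_iff_isUnit.2 <| (isUnit_iff_isUnit_det A).2 hA
  have hdet : A.det ^ 2 = ∏ i, hB.1.eigenvalues i := by
    have := hB.1.det_eq_prod_eigenvalues
    rw [det_mul, det_conjTranspose, star_trivial] at this
    simpa [sq] using this
  rw [hsNorm_inv_sq_eq_trace_inv, hsNorm_sq_eq_trace, hB.1.trace_inv hB.det_pos.ne'.isUnit,
    hB.1.trace_eq_sum_eigenvalues, hdet]
  simpa using Real.card_pow_mul_sum_inv_mul_prod_le Finset.univ _ fun i _ ↦ hB.eigenvalues_pos i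

/-- For an invertible `d × d` real matrix `A` (`d ≥ 1`),
`‖A⁻¹‖_HS ≤ ‖A‖_HS^(d-1) / (|det A| · d^((d-2)/2))`. -/
theorem stmt6 (d : ℕ) (hd : 1 ≤ d) (A : Matrix (Fin d) (Fin d) ℝ)
    (hA : IsUnit A.det) :
    hsNorm A⁻¹ ≤ hsNorm A ^ (d - 1) / (|A.det| * (d : ℝ) ^ (((d : ℝ) - 2) / 2)) := by
  have hd₀ : (0 : ℝ) < d := by exact_mod_cast hd
  set c := (d : ℝ) ^ (((d : ℝ) - 2) / 2)
  have hc : c ^ 2 * (d : ℝ) ^ 2 = (d : ℝ) ^ d := Real.rpow_sub_two_div_two_sq_mul_sq hd₀ d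
  rw [le_div_iff₀ (mul_pos (abs_pos.2 hA.ne_zero) (by positivity))]
  refine le_of_pow_le_pow_left₀ two_ne_zero (by unfold hsNorm; positivity) ?_
  refine le_of_mul_le_mul_right ?_ (by positivity : (0 : ℝ) < (d : ℝ) ^ 2)
  calc (hsNorm A⁻¹ * (|A.det| * c)) ^ 2 * (d : ℝ) ^ 2
      = (d : ℝ) ^ d * (hsNorm A⁻¹ ^ 2 * A.det ^ 2) := by rw [← hc, ← sq_abs A.det]; ring
    _ ≤ (d : ℝ) ^ 2 * (hsNorm A ^ 2) ^ (d - 1) := card_pow_mul_hsNorm_inv_sq_mul_det_sq_le A hA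
    _ = (hsNorm A ^ (d - 1)) ^ 2 * (d : ℝ) ^ 2 := by ring
end

section
/- Let S ⊆ ℝ be a closed set (the spectrum) and g : ℝ → ℝ≥0 a continuous function with g(x) ≤ dist(x, S) for all x, and g(x) = 0 iff x ∈ S. Fix λ₀ ∉ S, and define λ_{i+1} = λ_i + g(λ_i). If λ⁺ = min{x ∈ S : x > λ₀} exists, then the increasing sequence (λ_i) converges to λ⁺. -/
open Metric Filter

/-- Let `S ⊆ ℝ` be closed, `g : ℝ → ℝ` continuous and nonnegative
with `g ≤ dist(·, S)` and `g⁻¹(0) = S`, and `λ₀ ∉ S`.  Define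
`λ_{i+1} = λ_i + g(λ_i)`.  If `λ⁺ = min {x ∈ S : x > λ₀}` exists, then the
sequence `(λ_i)` is increasing and converges to `λ⁺`. -/
theorem stmt12 (S : Set ℝ) (hS : IsClosed S)
    (g : ℝ → ℝ) (hg : Continuous g) (hg0 : ∀ x, 0 ≤ g x)
    (hgd : ∀ x, g x ≤ infDist x S) (hgz : ∀ x, g x = 0 ↔ x ∈ S)
    (lam0 : ℝ) (hlam0 : lam0 ∉ S)
    (lamp : ℝ) (hlampS : lamp ∈ S) (hlampgt : lam0 < lamp)
    (hmin : ∀ x ∈ S, lam0 < x → lamp ≤ x)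
    (seq : ℕ → ℝ) (hseq0 : seq 0 = lam0)
    (hrec : ∀ i, seq (i + 1) = seq i + g (seq i)) :
    Monotone seq ∧ Tendsto seq atTop (nhds lamp) := by
  have hmono : Monotone seq := by
    apply monotone_nat_of_le_succ
    intro i
    rw [hrec i]
    linarith [hg0 (seq i)]
  have hub : ∀ i, seq i ≤ lamp := by
    intro i
    induction i with
    | zero => rw [hseq0]; exact hlampgt.le
    | succ n ih =>
      rw [hrec n]
      have h1 : g (seq n) ≤ infDist (seq n) S := hgd (seq n)
      have h2 : infDist (seq n) S ≤ dist (seq n) lamp := infDist_le_dist_of_mem hlampS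
      have h3 : dist (seq n) lamp = lamp - seq n := by
        rw [Real.dist_eq, abs_of_nonpos (by linarith)]; ring
      linarith
  have hbdd : BddAbove (Set.range seq) := ⟨lamp, by rintro _ ⟨i, rfl⟩; exact hub i⟩
  set L := ⨆ i, seq i with hLdef
  have hL : Tendsto seq atTop (nhds L) := tendsto_atTop_ciSup hmono hbdd
  have hLle : L ≤ lamp := le_of_tendsto' hL hub
  have hgL : g L = 0 := by
    have h1 : Tendsto (fun i => g (seq i)) atTop (nhds (g L)) :=
      (hg.continuousAt).tendsto.comp hL
    have h2 : Tendsto (fun i => seq (i + 1) - seq i) atTop (nhds (L - L)) :=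
      ((hL.comp (tendsto_add_atTop_nat 1)).sub hL)
    have h3 : (fun i => seq (i + 1) - seq i) = fun i => g (seq i) := by
      funext i; rw [hrec i]; ring
    rw [h3] at h2
    have := tendsto_nhds_unique h1 h2
    linarith
  have hLS : L ∈ S := (hgz L).mp hgL
  have hseq1 : lam0 < seq 1 := by
    rw [hrec 0, hseq0]
    have : g lam0 ≠ 0 := fun h => hlam0 ((hgz lam0).mp h)
    have := hg0 lam0
    have : 0 < g lam0 := lt_of_le_of_ne (hg0 lam0) (Ne.symm ‹g lam0 ≠ 0›)
    linarith
  have hLge : seq 1 ≤ L := le_ciSup hbdd 1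
  have : lamp ≤ L := hmin L hLS (lt_of_lt_of_le hseq1 hLge)
  have hLeq : L = lamp := le_antisymm hLle this
  exact ⟨hmono, hLeq ▸ hL⟩
end

section
/- Let S ⊆ ℝ be a closed nonempty set, g : ℝ → ℝ≥0 continuous with g ≤ dist(·, S) and g⁻¹(0) = S, λ₀ ∉ S. Define λ_{i+1} = λ_i - g(λ_i). If λ⁻ = max{x ∈ S : x < λ₀} exists, then (λ_i) is decreasing and converges to λ⁻. -/
open Metric Filter

/-- Let `S ⊆ ℝ` be closed, `g : ℝ → ℝ` continuous and nonnegative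
with `g ≤ dist(·, S)` and `g⁻¹(0) = S`, and `λ₀ ∉ S`.  Define
`λ_{i+1} = λ_i - g(λ_i)`.  If `λ⁻ = max {x ∈ S : x < λ₀}` exists, then the
sequence `(λ_i)` is decreasing and converges to `λ⁻`. -/
theorem stmt13 (S : Set ℝ) (hS : IsClosed S)
    (g : ℝ → ℝ) (hg : Continuous g) (hg0 : ∀ x, 0 ≤ g x)
    (hgd : ∀ x, g x ≤ infDist x S) (hgz : ∀ x, g x = 0 ↔ x ∈ S)
    (lam0 : ℝ) (hlam0 : lam0 ∉ S)
    (lamp : ℝ) (hlampS : lamp ∈ S) (hlampgt : lamp < lam0)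
    (hmax : ∀ x ∈ S, x < lam0 → x ≤ lamp)
    (seq : ℕ → ℝ) (hseq0 : seq 0 = lam0)
    (hrec : ∀ i, seq (i + 1) = seq i - g (seq i)) :
    Antitone seq ∧ Tendsto seq atTop (nhds lamp) := by
  have hlb : ∀ i, lamp ≤ seq i := by
    intro i
    induction i with
    | zero => rw [hseq0]; exact hlampgt.le
    | succ n ih =>
      rw [hrec]
      have h1 : g (seq n) ≤ seq n - lamp := by
        have := (hgd (seq n)).trans (infDist_le_dist_of_mem hlampS)
        rwa [Real.dist_eq, abs_of_nonneg (by linarith)] at this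
      linarith
  have hant : Antitone seq := by
    apply antitone_nat_of_succ_le
    intro n
    rw [hrec]
    linarith [hg0 (seq n)]
  have hbdd : BddBelow (Set.range seq) := ⟨lamp, by rintro _ ⟨i, rfl⟩; exact hlb i⟩
  have htend : Tendsto seq atTop (nhds (⨅ i, seq i)) :=
    tendsto_atTop_ciInf hant hbdd
  set L := ⨅ i, seq i with hL
  have hLlb : lamp ≤ L := le_ciInf hlb
  -- g (seq n) = seq n - seq (n+1) → 0
  have hgs : Tendsto (fun n => g (seq n)) atTop (nhds 0) := by
    have h1 : Tendsto (fun n => seq n - seq (n + 1)) atTop (nhds (L - L)) :=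
      htend.sub (htend.comp (tendsto_add_atTop_nat 1))
    rw [sub_self] at h1
    refine h1.congr fun n => ?_
    rw [hrec]; ring
  have hgL : Tendsto (fun n => g (seq n)) atTop (nhds (g L)) :=
    (hg.tendsto L).comp htend
  have hgL0 : g L = 0 := tendsto_nhds_unique hgL hgs
  have hLS : L ∈ S := (hgz L).mp hgL0
  have hg0pos : 0 < g lam0 :=
    lt_of_le_of_ne (hg0 lam0) fun h => hlam0 ((hgz lam0).mp h.symm)
  have hLlt : L < lam0 := by
    have : L ≤ seq 1 := ciInf_le hbdd 1
    rw [hrec 0, hseq0] at this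
    linarith
  have : L ≤ lamp := hmax L hLS hLlt
  have hEq : L = lamp := le_antisymm this hLlb
  exact ⟨hant, hEq ▸ htend⟩
end

section
/- Let f : ℝ → ℝ be differentiable at λ* with f(λ*) = 0 and |f'(λ*)| = 1, and suppose the iteration λ_{i+1} = λ_i + |f(λ_i)| (with all λ_i < λ* and f ≥ 0 on [λ_0, λ*], f continuously differentiable with Lipschitz derivative near λ*) converges to λ*. Then the convergence is quadratic: |λ_{i+1} - λ*| = O(|λ_i - λ*|²), i.e., there exist C, δ > 0 such that |λ_i - λ*| < δ implies |λ_{i+1} - λ*| ≤ C |λ_i - λ*|². -/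
open Metric Filter Topology

/-- Quadratic (quasi-Newton) convergence.  Suppose `f(λ*) = 0`,
`|f'(λ*)| = 1`, `f` is differentiable with Lipschitz derivative near `λ*`, the
iterates `λ_{i+1} = λ_i + |f(λ_i)|` satisfy `λ_i < λ*`, `f ≥ 0` on `[λ₀, λ*]`,
and `λ_i → λ*`.  Then there exist `C, δ > 0` such that `|λ_i - λ*| < δ` implies
`|λ_{i+1} - λ*| ≤ C |λ_i - λ*|²`. -/
theorem stmt14 (f : ℝ → ℝ) (lams : ℝ)
    (hf0 : f lams = 0) (hderiv : |deriv f lams| = 1)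
    (hsmooth : ∃ ε : ℝ, ∃ K : NNReal, 0 < ε ∧
      (∀ x ∈ ball lams ε, HasDerivAt f (deriv f x) x) ∧
      LipschitzOnWith K (deriv f) (ball lams ε))
    (seq : ℕ → ℝ)
    (hrec : ∀ i, seq (i + 1) = seq i + |f (seq i)|)
    (hlt : ∀ i, seq i < lams)
    (hfpos : ∀ x, seq 0 ≤ x → x ≤ lams → 0 ≤ f x)
    (hconv : Tendsto seq atTop (nhds lams)) :
    ∃ C δ : ℝ, 0 < C ∧ 0 < δ ∧
      ∀ i, |seq i - lams| < δ → |seq (i + 1) - lams| ≤ C * |seq i - lams| ^ 2 := by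
  obtain ⟨ε, K, hε, hd, hK⟩ := hsmooth
  have hmem : lams ∈ ball lams ε := mem_ball_self hε
  have hda : HasDerivAt f (deriv f lams) lams := hd lams hmem
  -- the derivative at λ* is ≤ 0
  have hdle : deriv f lams ≤ 0 := by
    have hslope := hasDerivAt_iff_tendsto_slope.mp hda
    have hsub : 𝓝[<] lams ≤ 𝓝[{lams}ᶜ] lams :=
      nhdsWithin_mono _ (fun x hx => ne_of_lt hx)
    have hslope' : Tendsto (slope f lams) (𝓝[<] lams) (𝓝 (deriv f lams)) :=
      hslope.mono_left hsub
    refine le_of_tendsto hslope' ?_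
    have hIoo : Set.Ioo (seq 0) lams ∈ 𝓝[<] lams :=
      Ioo_mem_nhdsLT_of_mem ⟨hlt 0, le_refl _⟩
    filter_upwards [hIoo] with x hx
    have hfx : 0 ≤ f x := hfpos x (le_of_lt hx.1) (le_of_lt hx.2)
    have heq : slope f lams x = f x / (x - lams) := by
      simp [slope_def_field, hf0]
    rw [heq]
    exact div_nonpos_of_nonneg_of_nonpos hfx (by linarith [hx.2])
  have hdm1 : deriv f lams = -1 := by
    rcases abs_eq (by norm_num : (0:ℝ) ≤ 1) |>.mp hderiv with h | h
    · linarith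
    · exact h
  -- monotonicity of the sequence
  have hmono : ∀ i, seq 0 ≤ seq i := by
    intro i
    induction i with
    | zero => exact le_refl _
    | succ n ih =>
      rw [hrec n]
      have := abs_nonneg (f (seq n))
      linarith
  refine ⟨(K : ℝ) + 1, ε, by positivity, hε, ?_⟩
  intro i hi
  set x := seq i with hx
  have hxlt : x < lams := hlt i
  have habs : |x - lams| = lams - x := by rw [abs_of_neg (by linarith)]; ring
  rw [habs] at hi ⊢
  have hfx : 0 ≤ f x := hfpos x (hmono i) (le_of_lt hxlt)
  -- Taylor-type estimate via mean value inequality on g y = f y + y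
  set g : ℝ → ℝ := fun y => f y + y with hg
  have hsub : Set.Icc x lams ⊆ ball lams ε := by
    intro y hy
    rw [mem_ball, Real.dist_eq, abs_of_nonpos (by linarith [hy.2])]
    linarith [hy.1]
  have hgd : ∀ y ∈ Set.Icc x lams, HasDerivWithinAt g (deriv f y + 1) (Set.Icc x lams) y := by
    intro y hy
    exact ((hd y (hsub hy)).add (hasDerivAt_id y)).hasDerivWithinAt
  have hbound : ∀ y ∈ Set.Icc x lams, ‖deriv f y + 1‖ ≤ (K : ℝ) * (lams - x) := by
    intro y hy
    have h1 : dist (deriv f y) (deriv f lams) ≤ (K : ℝ) * dist y lams :=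
      hK.dist_le_mul y (hsub hy) lams hmem
    have h2 : dist y lams ≤ lams - x := by
      rw [Real.dist_eq, abs_of_nonpos (by linarith [hy.2])]
      linarith [hy.1]
    have h3 : ‖deriv f y + 1‖ = dist (deriv f y) (deriv f lams) := by
      rw [Real.norm_eq_abs, Real.dist_eq, hdm1]; ring_nf
    rw [h3]
    calc dist (deriv f y) (deriv f lams) ≤ (K : ℝ) * dist y lams := h1
      _ ≤ (K : ℝ) * (lams - x) := by
          exact mul_le_mul_of_nonneg_left h2 (K.coe_nonneg)
  have hmvt := Convex.norm_image_sub_le_of_norm_hasDerivWithin_le hgd hbound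
    (convex_Icc x lams) (Set.left_mem_Icc.mpr (le_of_lt hxlt))
    (Set.right_mem_Icc.mpr (le_of_lt hxlt))
  have hglams : g lams = lams := by simp [hg, hf0]
  have hgx : g x = f x + x := rfl
  rw [hglams, hgx] at hmvt
  have hnorm : ‖lams - (f x + x)‖ ≤ (K : ℝ) * (lams - x) * (lams - x) := by
    have : ‖lams - x‖ = lams - x := by
      rw [Real.norm_eq_abs, abs_of_nonneg (by linarith)]
    rwa [this] at hmvt
  have hnext : seq (i + 1) = x + f x := by rw [hrec i, abs_of_nonneg hfx]
  have hnextlt : seq (i + 1) < lams := hlt (i + 1)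
  have h5 : |seq (i + 1) - lams| = lams - (f x + x) := by
    rw [abs_of_neg (by linarith), hnext]; ring
  rw [h5]
  have h6 : lams - (f x + x) ≤ |lams - (f x + x)| := le_abs_self _
  have h7 : |lams - (f x + x)| ≤ (K : ℝ) * (lams - x) * (lams - x) := hnorm
  have h8 : (K : ℝ) * (lams - x) * (lams - x) ≤ ((K : ℝ) + 1) * (lams - x) ^ 2 := by
    have : 0 ≤ (lams - x) ^ 2 := sq_nonneg _
    nlinarith
  linarith
end
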